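/- Conversely to the previous: let h₁,…,h_k be proper closed convex on X, S ⊆ {1,…,k}, fix {z_i}_{i∉S} and x₀ ∈ X. Suppose x* minimizes x ↦ Σ_{i∈S} h_i(x) + ½‖x − (x₀ − Σ_{i∉S} z_i)‖² and there exist {z̃_i}_{i∈S} with z̃_i ∈ ∂h_i(x*) for each i ∈ S and x* − x₀ + Σ_{i∉S} z_i + Σ_{i∈S} z̃_i = 0. Then {z̃_i}_{i∈S} minimizes Σ_{i∈S} h_i*(z_i) + ½‖−Σ_{i∈S} z_i − Σ_{i∉S} z_i + x₀‖². -/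

import Mathlib

open RealInnerProductSpace Filter Topology

/-- Fenchel conjugate of an extended-real-valued function on a real inner product space. -/
noncomputable def fenchelConj {X : Type*} [NormedAddCommGroup X] [InnerProductSpace ℝ X]
    (f : X → EReal) (z : X) : EReal :=
  ⨆ x : X, ((⟪z, x⟫ : ℝ) : EReal) - f x

/-- A proper function: not identically `⊤` and never `⊥`. -/
def ProperFn {X : Type*} (f : X → EReal) : Prop :=
  (∃ x, f x ≠ ⊤) ∧ ∀ x, f x ≠ ⊥

/-- Convexity for extended-real-valued functions. -/
def ConvexFnE {X : Type*} [AddCommGroup X] [Module ℝ X] (f : X → EReal) : Prop :=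
  ∀ x y : X, ∀ t : ℝ, 0 < t → t < 1 →
    f (t • x + (1 - t) • y) ≤ (t : EReal) * f x + ((1 - t : ℝ) : EReal) * f y

/-- `z` is a subgradient of `f` at `x`. -/
def IsSubgrad {X : Type*} [NormedAddCommGroup X] [InnerProductSpace ℝ X]
    (f : X → EReal) (x z : X) : Prop :=
  ∀ y : X, f x + ((⟪z, y - x⟫ : ℝ) : EReal) ≤ f y

/-!
At `x*` the subgradient inclusions `z̃ᵢ ∈ ∂hᵢ(x*)` turn the Fenchel–Young inequalities
`hᵢ*(z̃ᵢ) ≥ ⟪z̃ᵢ, x*⟫ - hᵢ(x*)` into equalities, while for arbitrary `yᵢ` they remain lower bounds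
`hᵢ*(yᵢ) ≥ ⟪yᵢ, x*⟫ - hᵢ(x*)`. Since `x* = x₀ - ∑_{i ∉ S} zᵢ - ∑_{i ∈ S} z̃ᵢ`, the dual objective at
`y` then exceeds the one at `z̃` by at least `½‖∑ z̃ᵢ - ∑ yᵢ‖² ≥ 0`.
-/

theorem EReal.coe_finset_sum {ι : Type*} (s : Finset ι) (f : ι → ℝ) :
    ((∑ i ∈ s, f i : ℝ) : EReal) = ∑ i ∈ s, ((f i : ℝ) : EReal) :=
  map_sum (⟨⟨(↑), EReal.coe_zero⟩, EReal.coe_add⟩ : ℝ →+ EReal) f s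

section Conjugate

variable {X : Type*} [NormedAddCommGroup X] [InnerProductSpace ℝ X]

theorem IsSubgrad.coe_toReal_apply {f : X → EReal} {x z : X}
    (hf : ProperFn f) (hz : IsSubgrad f x z) :
    ((f x).toReal : EReal) = f x := by
  refine EReal.coe_toReal (fun htop => ?_) (hf.2 x)
  obtain ⟨w, hw⟩ := hf.1
  have := hz w
  rw [htop, EReal.top_add_coe, top_le_iff] at this
  exact hw this

theorem inner_sub_le_fenchelConj (f : X → EReal) (x y : X) :
    ((⟪y, x⟫ : ℝ) : EReal) - f x ≤ fenchelConj f y :=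
  le_iSup (fun x => ((⟪y, x⟫ : ℝ) : EReal) - f x) x

theorem IsSubgrad.fenchelConj_eq {f : X → EReal} {x z : X}
    (hf : ProperFn f) (hz : IsSubgrad f x z) :
    fenchelConj f z = ((⟪z, x⟫ - (f x).toReal : ℝ) : EReal) := by
  have hfx := hz.coe_toReal_apply hf
  refine le_antisymm (iSup_le fun y => ?_) ?_
  · rcases eq_or_ne (f y) ⊤ with hy | hy
    · simp [hy]
    · have hsub := hz y
      rw [← hfx, ← EReal.coe_toReal hy (hf.2 y), ← EReal.coe_add, EReal.coe_le_coe_iff,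
        inner_sub_right] at hsub
      rw [← EReal.coe_toReal hy (hf.2 y), ← EReal.coe_sub, EReal.coe_le_coe_iff]
      linarith
  · rw [EReal.coe_sub, hfx]
    exact inner_sub_le_fenchelConj f x z

end Conjugate

theorem inner_add_half_norm_sq_le {X : Type*} [NormedAddCommGroup X] [InnerProductSpace ℝ X]
    (x a b : X) : ⟪a, x⟫ + 1 / 2 * ‖x‖ ^ 2 ≤ ⟪b, x⟫ + 1 / 2 * ‖x + (a - b)‖ ^ 2 := by
  rw [norm_add_sq_real, inner_sub_right, real_inner_comm x a, real_inner_comm x b]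
  nlinarith [sq_nonneg ‖a - b‖]

theorem stmt13_general {X : Type*} [NormedAddCommGroup X] [InnerProductSpace ℝ X]
    (k : ℕ) (h : Fin k → X → EReal) (hp : ∀ i, ProperFn (h i))
    (x₀ : X) (S : Finset (Fin k)) (z : Fin k → X) (xstar : X) (zt : Fin k → X)
    (hsub : ∀ i ∈ S, IsSubgrad (h i) xstar (zt i))
    (heq : xstar - x₀ + (∑ i ∈ Sᶜ, z i) + (∑ i ∈ S, zt i) = 0) :
    ∀ y : Fin k → X,
      (∑ i ∈ S, fenchelConj (h i) (zt i))
          + ((((1:ℝ)/2) * ‖-(∑ i ∈ S, zt i) - (∑ i ∈ Sᶜ, z i) + x₀‖^2 : ℝ) : EReal)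
        ≤ (∑ i ∈ S, fenchelConj (h i) (y i))
          + ((((1:ℝ)/2) * ‖-(∑ i ∈ S, y i) - (∑ i ∈ Sᶜ, z i) + x₀‖^2 : ℝ) : EReal) := by
  intro y
  have hx : -(∑ i ∈ S, zt i) - (∑ i ∈ Sᶜ, z i) + x₀ = xstar := by
    rw [eq_comm, ← sub_eq_zero, ← heq]; abel
  have hy : -(∑ i ∈ S, y i) - (∑ i ∈ Sᶜ, z i) + x₀
      = xstar + ((∑ i ∈ S, zt i) - ∑ i ∈ S, y i) := by
    rw [← hx]; abel
  set c : Fin k → ℝ := fun i => (h i xstar).toReal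
  have hzt : ∑ i ∈ S, fenchelConj (h i) (zt i)
      = ((⟪∑ i ∈ S, zt i, xstar⟫ - ∑ i ∈ S, c i : ℝ) : EReal) := by
    rw [Finset.sum_congr rfl fun i hi => (hsub i hi).fenchelConj_eq (hp i), ← EReal.coe_finset_sum,
      Finset.sum_sub_distrib, sum_inner]
  have hy_le : ((⟪∑ i ∈ S, y i, xstar⟫ - ∑ i ∈ S, c i : ℝ) : EReal)
      ≤ ∑ i ∈ S, fenchelConj (h i) (y i) := by
    rw [sum_inner, ← Finset.sum_sub_distrib, EReal.coe_finset_sum]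
    refine Finset.sum_le_sum fun i hi => ?_
    rw [EReal.coe_sub, (hsub i hi).coe_toReal_apply (hp i)]
    exact inner_sub_le_fenchelConj (h i) xstar (y i)
  rw [hzt, hx, hy, ← EReal.coe_add]
  calc _ ≤ ((⟪∑ i ∈ S, y i, xstar⟫ - ∑ i ∈ S, c i
          + 1 / 2 * ‖xstar + ((∑ i ∈ S, zt i) - ∑ i ∈ S, y i)‖ ^ 2 : ℝ) : EReal) := by
        rw [EReal.coe_le_coe_iff]
        linarith [inner_add_half_norm_sq_le xstar (∑ i ∈ S, zt i) (∑ i ∈ S, y i)]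
    _ ≤ _ := by
        rw [EReal.coe_add]
        exact add_le_add_left hy_le _

theorem stmt13 {X : Type*} [NormedAddCommGroup X] [InnerProductSpace ℝ X] [FiniteDimensional ℝ X]
    (k : ℕ) (h : Fin k → X → EReal) (hp : ∀ i, ProperFn (h i))
    (hl : ∀ i, LowerSemicontinuous (h i)) (hc : ∀ i, ConvexFnE (h i))
    (x₀ : X) (S : Finset (Fin k)) (z : Fin k → X) (xstar : X) (zt : Fin k → X)
    (hxmin : ∀ x : X,
      (∑ i ∈ S, h i xstar) + ((((1:ℝ)/2) * ‖xstar - (x₀ - ∑ i ∈ Sᶜ, z i)‖^2 : ℝ) : EReal)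
        ≤ (∑ i ∈ S, h i x) + ((((1:ℝ)/2) * ‖x - (x₀ - ∑ i ∈ Sᶜ, z i)‖^2 : ℝ) : EReal))
    (hsub : ∀ i ∈ S, IsSubgrad (h i) xstar (zt i))
    (heq : xstar - x₀ + (∑ i ∈ Sᶜ, z i) + (∑ i ∈ S, zt i) = 0) :
    ∀ y : Fin k → X,
      (∑ i ∈ S, fenchelConj (h i) (zt i))
          + ((((1:ℝ)/2) * ‖-(∑ i ∈ S, zt i) - (∑ i ∈ Sᶜ, z i) + x₀‖^2 : ℝ) : EReal)
        ≤ (∑ i ∈ S, fenchelConj (h i) (y i))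
          + ((((1:ℝ)/2) * ‖-(∑ i ∈ S, y i) - (∑ i ∈ Sᶜ, z i) + x₀‖^2 : ℝ) : EReal) :=
  stmt13_general k h hp x₀ S z xstar zt hsub heq
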